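/- arXiv:2410.11930 — 2 statements merged into one kernel-verified Lean document; each statement's English description precedes it below -/
import Mathlib

section
/- An ℓ-group G is a Martínez ℓ-group if and only if every principal convex ℓ-subgroup G(g) of G is an intersection of minimal prime subgroups of G. -/
/-!
Common definitions for lattice-ordered groups (ℓ-groups), written additively.
An ℓ-group is modeled as `[Lattice G] [AddGroup G]` together with the two
`CovariantClass` hypotheses expressing that translation is order-preserving.
-/

/-- The absolute value in an ℓ-group: `|g| = (g ⊔ 0) + ((-g) ⊔ 0)`. -/
def labs {G : Type*} [Lattice G] [AddGroup G] (g : G) : G := (g ⊔ 0) + (-g ⊔ 0)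

/-- A convex ℓ-subgroup of `G`: a subgroup which is a sublattice and is convex. -/
def IsConvexLSubgroup {G : Type*} [Lattice G] [AddGroup G] (H : Set G) : Prop :=
  (0 : G) ∈ H ∧ (∀ a ∈ H, -a ∈ H) ∧ (∀ a ∈ H, ∀ b ∈ H, a + b ∈ H) ∧
  (∀ a ∈ H, ∀ b ∈ H, a ⊔ b ∈ H) ∧ (∀ a ∈ H, ∀ b ∈ H, a ⊓ b ∈ H) ∧
  (∀ a ∈ H, ∀ b ∈ H, ∀ g : G, a ≤ g → g ≤ b → g ∈ H)

/-- The polar `g^⊥ = {h : |h| ⊓ |g| = 0}`. -/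
def polar {G : Type*} [Lattice G] [AddGroup G] (g : G) : Set G :=
  {h : G | labs h ⊓ labs g = 0}

/-- The double polar `g^{⊥⊥} = (g^⊥)^⊥ = {h : ∀ k ∈ g^⊥, |h| ⊓ |k| = 0}`. -/
def biPolar {G : Type*} [Lattice G] [AddGroup G] (g : G) : Set G :=
  {h : G | ∀ k ∈ polar g, labs h ⊓ labs k = 0}

/-- A d-subgroup: a convex ℓ-subgroup containing the double polar of each of its elements. -/
def IsDSubgroup {G : Type*} [Lattice G] [AddGroup G] (H : Set G) : Prop :=
  IsConvexLSubgroup H ∧ ∀ h ∈ H, biPolar h ⊆ H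

/-- A Martínez ℓ-group: every convex ℓ-subgroup is a d-subgroup. -/
def Martinez (G : Type*) [Lattice G] [AddGroup G] : Prop :=
  ∀ H : Set G, IsConvexLSubgroup H → IsDSubgroup H

/-- `G(g)`, the smallest convex ℓ-subgroup of `G` containing `g`. -/
def principalCLS {G : Type*} [Lattice G] [AddGroup G] (g : G) : Set G :=
  {x : G | ∀ H : Set G, IsConvexLSubgroup H → g ∈ H → x ∈ H}

/-- A prime subgroup: a proper convex ℓ-subgroup `P` with `a ⊓ b ∈ P → a ∈ P ∨ b ∈ P`. -/
def IsPrimeSubgroup {G : Type*} [Lattice G] [AddGroup G] (P : Set G) : Prop :=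
  IsConvexLSubgroup P ∧ P ≠ Set.univ ∧ ∀ a b : G, a ⊓ b ∈ P → a ∈ P ∨ b ∈ P

/-- A minimal prime subgroup. -/
def IsMinimalPrimeSubgroup {G : Type*} [Lattice G] [AddGroup G] (P : Set G) : Prop :=
  IsPrimeSubgroup P ∧ ∀ Q : Set G, IsPrimeSubgroup Q → Q ⊆ P → Q = P

/-- `Spec(G)`, the set of prime subgroups of `G`, as a type. -/
abbrev SpecType (G : Type*) [Lattice G] [AddGroup G] : Type _ :=
  {P : Set G // IsPrimeSubgroup P}

/-- `U(g) = {P ∈ Spec(G) : g ∉ P}`. -/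
def Uset {G : Type*} [Lattice G] [AddGroup G] (g : G) : Set (SpecType G) :=
  {P : SpecType G | g ∉ P.1}

/-- `V(g) = {P ∈ Spec(G) : g ∈ P}`. -/
def Vset {G : Type*} [Lattice G] [AddGroup G] (g : G) : Set (SpecType G) :=
  {P : SpecType G | g ∈ P.1}

/-- The patch topology on `Spec(G)`, generated by all the sets `U(g)` and `V(g)`. -/
def patchTop (G : Type*) [Lattice G] [AddGroup G] : TopologicalSpace (SpecType G) :=
  TopologicalSpace.generateFrom
    ({S : Set (SpecType G) | ∃ g : G, S = Uset g} ∪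
      {S : Set (SpecType G) | ∃ g : G, S = Vset g})

/-- The hull-kernel topology on `Spec(G)`, with base `{U(g) : g ∈ G}`. -/
def hkTop (G : Type*) [Lattice G] [AddGroup G] : TopologicalSpace (SpecType G) :=
  TopologicalSpace.generateFrom {S : Set (SpecType G) | ∃ g : G, S = Uset g}

set_option linter.unusedSectionVars false
set_option linter.unusedVariables false

section MartinezAux

variable {G : Type*} [Lattice G] [AddGroup G]
  [CovariantClass G G (· + ·) (· ≤ ·)]
  [CovariantClass G G (Function.swap (· + ·)) (· ≤ ·)]

lemma labs_eq_abs (g : G) : labs g = |g| := by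
  rw [labs, ← posPart_def, ← negPart_def, posPart_add_negPart]

lemma abs_mem_of_mem {H : Set G} (hH : IsConvexLSubgroup H) {x : G} (hx : x ∈ H) :
    |x| ∈ H := by
  rw [← labs_eq_abs, labs]
  exact hH.2.2.1 _ (hH.2.2.2.1 _ hx _ hH.1) _ (hH.2.2.2.1 _ (hH.2.1 _ hx) _ hH.1)

lemma lneg_abs_le (a : G) : -|a| ≤ a := by
  rw [abs, neg_sup, neg_neg]; exact inf_le_right

lemma mem_of_abs_mem {H : Set G} (hH : IsConvexLSubgroup H) {x : G} (hx : |x| ∈ H) :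
    x ∈ H :=
  hH.2.2.2.2.2 _ (hH.2.1 _ hx) _ hx x (lneg_abs_le x) (le_abs_self x)

lemma disj_mono {a b u : G} (h0 : 0 ≤ a) (hu : 0 ≤ u) (hab : a ≤ b) (h : b ⊓ u = 0) :
    a ⊓ u = 0 :=
  le_antisymm (h ▸ inf_le_inf_right u hab) (le_inf h0 hu)

lemma disj_mono_right {a u w : G} (h : a ⊓ u = 0) (h0 : 0 ≤ a) (hw : 0 ≤ w) (hwu : w ≤ u) :
    a ⊓ w = 0 :=
  le_antisymm (h ▸ inf_le_inf_left a hwu) (le_inf h0 hw)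

lemma inf_add_le_of_nonneg {u a b : G} (hu : 0 ≤ u) (ha : 0 ≤ a) (hb : 0 ≤ b) :
    u ⊓ (a + b) ≤ (u ⊓ a) + (u ⊓ b) := by
  have : (u ⊓ a) + (u ⊓ b) = ((u + u) ⊓ (a + u)) ⊓ ((u + b) ⊓ (a + b)) := by
    rw [add_inf, inf_add, inf_add]
  rw [this]
  refine le_inf (le_inf ?_ ?_) (le_inf ?_ inf_le_right)
  · exact inf_le_left.trans (le_add_of_nonneg_left hu)
  · exact inf_le_left.trans (le_add_of_nonneg_left ha)
  · exact inf_le_left.trans (le_add_of_nonneg_right hb)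

lemma disj_add {a b u : G} (hu : 0 ≤ u) (ha : 0 ≤ a) (hb : 0 ≤ b)
    (h1 : a ⊓ u = 0) (h2 : b ⊓ u = 0) : (a + b) ⊓ u = 0 := by
  refine le_antisymm ?_ (le_inf (add_nonneg ha hb) hu)
  calc (a + b) ⊓ u = u ⊓ (a + b) := inf_comm _ _
    _ ≤ (u ⊓ a) + (u ⊓ b) := inf_add_le_of_nonneg hu ha hb
    _ = 0 := by rw [inf_comm u a, inf_comm u b, h1, h2, add_zero]

/-- A filter of positive elements, not containing `0`. -/
def IsFilt (U : Set G) : Prop :=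
  U.Nonempty ∧ (0 : G) ∉ U ∧ (∀ u ∈ U, 0 ≤ u) ∧
  (∀ u ∈ U, ∀ v, u ≤ v → v ∈ U) ∧ (∀ u ∈ U, ∀ v ∈ U, u ⊓ v ∈ U)

/-- The prime candidate associated to a filter. -/
def PU (U : Set G) : Set G := {g : G | ∃ u ∈ U, |g| ⊓ u = 0}

lemma mem_PU_of_le {U : Set G} (hU : IsFilt U) {g s : G} (hs : ∃ u ∈ U, s ⊓ u = 0)
    (hgs : |g| ≤ s) : g ∈ PU U := by
  obtain ⟨u, huU, hsu⟩ := hs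
  exact ⟨u, huU, disj_mono (abs_nonneg g) (hU.2.2.1 u huU) hgs hsu⟩

lemma PU_add2 {U : Set G} (hU : IsFilt U) {a b : G}
    (ha : a ∈ PU U) (hb : b ∈ PU U) : ∃ u ∈ U, (|a| + |b|) ⊓ u = 0 := by
  obtain ⟨u, huU, hau⟩ := ha
  obtain ⟨v, hvU, hbv⟩ := hb
  refine ⟨u ⊓ v, hU.2.2.2.2 u huU v hvU, ?_⟩
  have hu := hU.2.2.1 u huU
  have hv := hU.2.2.1 v hvU
  have hw : (0 : G) ≤ u ⊓ v := le_inf hu hv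
  exact disj_add hw (abs_nonneg a) (abs_nonneg b)
    (disj_mono_right hau (abs_nonneg a) hw inf_le_left)
    (disj_mono_right hbv (abs_nonneg b) hw inf_le_right)

lemma PU_cls {U : Set G} (hU : IsFilt U) : IsConvexLSubgroup (PU U) := by
  obtain ⟨u0, hu0⟩ := hU.1
  have hzero : (0 : G) ∈ PU U := by
    refine ⟨u0, hu0, ?_⟩
    rw [abs_zero]
    exact inf_eq_left.mpr (hU.2.2.1 u0 hu0)
  refine ⟨hzero, ?_, ?_, ?_, ?_, ?_⟩
  · rintro a ⟨u, huU, hau⟩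
    exact ⟨u, huU, by rwa [abs_neg]⟩
  · -- addition
    intro a ha b hb
    obtain ⟨u, huU, hau⟩ := ha
    have hab2 : ∃ u ∈ U, (|b| + |a|) ⊓ u = 0 := PU_add2 hU hb ⟨u, huU, hau⟩
    have h3 : ∃ u ∈ U, (|a| + (|b| + |a|)) ⊓ u = 0 := by
      obtain ⟨v, hvU, hbv⟩ := hab2
      refine ⟨u ⊓ v, hU.2.2.2.2 u huU v hvU, ?_⟩
      have hw : (0 : G) ≤ u ⊓ v := le_inf (hU.2.2.1 u huU) (hU.2.2.1 v hvU)
      exact disj_add hw (abs_nonneg a) (add_nonneg (abs_nonneg b) (abs_nonneg a))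
        (disj_mono_right hau (abs_nonneg a) hw inf_le_left)
        (disj_mono_right hbv (add_nonneg (abs_nonneg b) (abs_nonneg a)) hw inf_le_right)
    refine mem_PU_of_le hU h3 ?_
    rw [abs_le']
    constructor
    · calc a + b ≤ |a| + |b| := add_le_add (le_abs_self a) (le_abs_self b)
        _ ≤ |a| + (|b| + |a|) := add_le_add_right (le_add_of_nonneg_right (abs_nonneg a)) _
    · calc -(a + b) = -b + -a := neg_add_rev a b
        _ ≤ |b| + |a| := add_le_add (neg_le_abs b) (neg_le_abs a)
        _ ≤ |a| + (|b| + |a|) := le_add_of_nonneg_left (abs_nonneg a)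
  · -- sup
    intro a ha b hb
    refine mem_PU_of_le hU (PU_add2 hU ha hb) ?_
    rw [abs_le']
    constructor
    · exact sup_le ((le_abs_self a).trans (le_add_of_nonneg_right (abs_nonneg b)))
        ((le_abs_self b).trans (le_add_of_nonneg_left (abs_nonneg a)))
    · rw [neg_sup]
      exact inf_le_left.trans ((neg_le_abs a).trans (le_add_of_nonneg_right (abs_nonneg b)))
  · -- inf
    intro a ha b hb
    refine mem_PU_of_le hU (PU_add2 hU ha hb) ?_
    rw [abs_le']
    constructor
    · exact inf_le_left.trans ((le_abs_self a).trans (le_add_of_nonneg_right (abs_nonneg b)))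
    · rw [neg_inf]
      exact sup_le ((neg_le_abs a).trans (le_add_of_nonneg_right (abs_nonneg b)))
        ((neg_le_abs b).trans (le_add_of_nonneg_left (abs_nonneg a)))
  · -- convexity
    intro a ha b hb g h1 h2
    refine mem_PU_of_le hU (PU_add2 hU ha hb) ?_
    rw [abs_le']
    constructor
    · exact (h2.trans (le_abs_self b)).trans (le_add_of_nonneg_left (abs_nonneg a))
    · exact ((neg_le_neg_iff.mpr h1).trans (neg_le_abs a)).trans
        (le_add_of_nonneg_right (abs_nonneg b))

lemma not_mem_PU_of_mem {U : Set G} (hU : IsFilt U) {u : G} (huU : u ∈ U) : u ∉ PU U := by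
  rintro ⟨v, hvU, huv⟩
  rw [abs_of_nonneg (hU.2.2.1 u huU)] at huv
  exact hU.2.1 (huv ▸ hU.2.2.2.2 u huU v hvU)

lemma PU_ne_univ {U : Set G} (hU : IsFilt U) : PU U ≠ Set.univ := by
  obtain ⟨u0, hu0⟩ := hU.1
  intro h
  exact not_mem_PU_of_mem hU hu0 (h.symm ▸ Set.mem_univ u0)

lemma prime_of_disjoint {P : Set G} (hP : IsConvexLSubgroup P) (hne : P ≠ Set.univ)
    (hd : ∀ a b : G, 0 ≤ a → 0 ≤ b → a ⊓ b = 0 → a ∈ P ∨ b ∈ P) : IsPrimeSubgroup P := by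
  refine ⟨hP, hne, fun a b hab => ?_⟩
  set c := a ⊓ b with hc
  have hca : 0 ≤ a + -c := by
    have := add_le_add_left (inf_le_left : c ≤ a) (-c)
    rwa [add_neg_cancel] at this
  have hcb : 0 ≤ b + -c := by
    have := add_le_add_left (inf_le_right : c ≤ b) (-c)
    rwa [add_neg_cancel] at this
  have hdisj : (a + -c) ⊓ (b + -c) = 0 := by
    rw [← inf_add, ← hc, add_neg_cancel]
  rcases hd _ _ hca hcb hdisj with h | h
  · left
    have := hP.2.2.1 _ h _ hab
    rwa [neg_add_cancel_right] at this
  · right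
    have := hP.2.2.1 _ h _ hab
    rwa [neg_add_cancel_right] at this

lemma PU_prime {U : Set G} (hU : IsFilt U)
    (hmax : ∀ V : Set G, IsFilt V → U ⊆ V → V = U) : IsPrimeSubgroup (PU U) := by
  refine prime_of_disjoint (PU_cls hU) (PU_ne_univ hU) ?_
  intro a b ha hb hab
  by_cases hA : a ∈ PU U
  · exact Or.inl hA
  · right
    -- the filter generated by `U` and `a`
    have hA' : ∀ u ∈ U, u ⊓ a ≠ 0 := by
      intro u huU h
      exact hA ⟨u, huU, by rw [abs_of_nonneg ha, inf_comm]; exact h⟩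
    obtain ⟨u0, hu0⟩ := hU.1
    set V : Set G := {v : G | 0 ≤ v ∧ ∃ u ∈ U, u ⊓ a ≤ v} with hV
    have hVfilt : IsFilt V := by
      refine ⟨⟨a, ha, u0, hu0, inf_le_right⟩, ?_, fun v hv => hv.1, ?_, ?_⟩
      · rintro ⟨-, u, huU, hle⟩
        exact hA' u huU (le_antisymm hle (le_inf (hU.2.2.1 u huU) ha))
      · rintro v ⟨hv0, u, huU, hle⟩ w hvw
        exact ⟨hv0.trans hvw, u, huU, hle.trans hvw⟩
      · rintro v ⟨hv0, u, huU, hle⟩ w ⟨hw0, u', hu'U, hle'⟩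
        refine ⟨le_inf hv0 hw0, u ⊓ u', hU.2.2.2.2 u huU u' hu'U, ?_⟩
        exact le_inf ((inf_le_inf_right a inf_le_left).trans hle)
          ((inf_le_inf_right a inf_le_right).trans hle')
    have hUV : U ⊆ V := fun u huU => ⟨hU.2.2.1 u huU, u, huU, inf_le_left⟩
    have haU : a ∈ U := by
      rw [← hmax V hVfilt hUV]
      exact ⟨ha, u0, hu0, inf_le_right⟩
    exact ⟨a, haU, by rw [abs_of_nonneg hb, inf_comm]; exact hab⟩

lemma PU_subset_prime {U : Set G} (hU : IsFilt U) {Q : Set G} (hQ : IsPrimeSubgroup Q)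
    (hQP : Q ⊆ PU U) : PU U ⊆ Q := by
  rintro p ⟨u, huU, hpu⟩
  have huQ : u ∉ Q := fun h => not_mem_PU_of_mem hU huU (hQP h)
  have h0Q : (0 : G) ∈ Q := hQ.1.1
  rcases hQ.2.2 |p| u (hpu ▸ h0Q) with h | h
  · exact mem_of_abs_mem hQ.1 h
  · exact absurd h huQ

lemma PU_minimal {U : Set G} (hU : IsFilt U)
    (hmax : ∀ V : Set G, IsFilt V → U ⊆ V → V = U) : IsMinimalPrimeSubgroup (PU U) :=
  ⟨PU_prime hU hmax, fun Q hQ hQP => Set.Subset.antisymm hQP (PU_subset_prime hU hQ hQP)⟩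

lemma exists_max_filt {F : Set G} (hF : IsFilt F) :
    ∃ U : Set G, F ⊆ U ∧ IsFilt U ∧ ∀ V : Set G, IsFilt V → U ⊆ V → V = U := by
  have hch : ∀ c ⊆ {U : Set G | IsFilt U}, IsChain (· ⊆ ·) c → c.Nonempty →
      ∃ ub ∈ {U : Set G | IsFilt U}, ∀ s ∈ c, s ⊆ ub := by
    intro c hcS hchain hcne
    obtain ⟨t0, ht0⟩ := hcne
    refine ⟨⋃₀ c, ?_, fun s hs => Set.subset_sUnion_of_mem hs⟩
    have ht0F : IsFilt t0 := hcS ht0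
    obtain ⟨x0, hx0⟩ := ht0F.1
    refine ⟨⟨x0, t0, ht0, hx0⟩, ?_, ?_, ?_, ?_⟩
    · rintro ⟨t, htc, h0t⟩
      exact (hcS htc).2.1 h0t
    · rintro u ⟨t, htc, hut⟩
      exact (hcS htc).2.2.1 u hut
    · rintro u ⟨t, htc, hut⟩ v huv
      exact ⟨t, htc, (hcS htc).2.2.2.1 u hut v huv⟩
    · rintro u ⟨t, htc, hut⟩ v ⟨t', ht'c, hvt'⟩
      rcases hchain.total htc ht'c with h | h
      · exact ⟨t', ht'c, (hcS ht'c).2.2.2.2 u (h hut) v hvt'⟩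
      · exact ⟨t, htc, (hcS htc).2.2.2.2 u hut v (h hvt')⟩
  obtain ⟨U, hFU, hUmax⟩ := zorn_subset_nonempty {U : Set G | IsFilt U} hch F hF
  exact ⟨U, hFU, hUmax.1, fun V hV hUV => (hUmax.2 hV hUV).antisymm hUV⟩

lemma compl_filt {Q : Set G} (hQ : IsPrimeSubgroup Q) :
    IsFilt {u : G | 0 ≤ u ∧ u ∉ Q} := by
  obtain ⟨z, hz⟩ : ∃ z, z ∉ Q := by
    by_contra h
    push_neg at h
    exact hQ.2.1 (Set.eq_univ_iff_forall.mpr h)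
  refine ⟨⟨|z|, abs_nonneg z, fun h => hz (mem_of_abs_mem hQ.1 h)⟩, ?_, fun u hu => hu.1, ?_, ?_⟩
  · rintro ⟨-, h0⟩
    exact h0 hQ.1.1
  · rintro u ⟨hu0, huQ⟩ v huv
    refine ⟨hu0.trans huv, fun hvQ => huQ ?_⟩
    exact hQ.1.2.2.2.2.2 0 hQ.1.1 v hvQ u hu0 huv
  · rintro u ⟨hu0, huQ⟩ v ⟨hv0, hvQ⟩
    refine ⟨le_inf hu0 hv0, fun h => ?_⟩
    rcases hQ.2.2 u v h with h' | h'
    · exact huQ h'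
    · exact hvQ h'

/-- Minimal prime subgroups are d-subgroups. -/
lemma minimal_prime_d {Q : Set G} (hQ : IsMinimalPrimeSubgroup Q) {h : G} (hhQ : h ∈ Q) :
    biPolar h ⊆ Q := by
  obtain ⟨U, hDU, hU, hmax⟩ := exists_max_filt (compl_filt hQ.1)
  have hPsub : PU U ⊆ Q := by
    rintro p ⟨u, huU, hpu⟩
    by_contra hp
    have habs : |p| ∉ Q := fun hh => hp (mem_of_abs_mem hQ.1.1 hh)
    have : |p| ∈ U := hDU ⟨abs_nonneg p, habs⟩
    exact hU.2.1 (hpu ▸ hU.2.2.2.2 _ this u huU)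
  have hPQ : PU U = Q := hQ.2 (PU U) (PU_prime hU hmax) hPsub
  obtain ⟨u, huU, hhu⟩ : h ∈ PU U := hPQ.symm ▸ hhQ
  have huQ : u ∉ Q := fun hh => not_mem_PU_of_mem hU huU (hPQ ▸ hh)
  have hupolar : u ∈ polar h := by
    show labs u ⊓ labs h = 0
    rw [labs_eq_abs, labs_eq_abs, abs_of_nonneg (hU.2.2.1 u huU), inf_comm]
    exact hhu
  intro y hy
  have := hy u hupolar
  rw [labs_eq_abs, labs_eq_abs, abs_of_nonneg (hU.2.2.1 u huU)] at this
  rcases hQ.1.2.2 |y| u (this ▸ hQ.1.1.1) with h' | h'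
  · exact mem_of_abs_mem hQ.1.1 h'
  · exact absurd h' huQ

lemma self_mem_principalCLS (g : G) : g ∈ principalCLS g := fun _ _ hg => hg

lemma principalCLS_cls (g : G) : IsConvexLSubgroup (principalCLS g) := by
  refine ⟨fun H hH _ => hH.1, ?_, ?_, ?_, ?_, ?_⟩
  · exact fun a ha H hH hg => hH.2.1 a (ha H hH hg)
  · exact fun a ha b hb H hH hg => hH.2.2.1 a (ha H hH hg) b (hb H hH hg)
  · exact fun a ha b hb H hH hg => hH.2.2.2.1 a (ha H hH hg) b (hb H hH hg)
  · exact fun a ha b hb H hH hg => hH.2.2.2.2.1 a (ha H hH hg) b (hb H hH hg)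
  · exact fun a ha b hb x h1 h2 H hH hg =>
      hH.2.2.2.2.2 a (ha H hH hg) b (hb H hH hg) x h1 h2

end MartinezAux


/-- `G` is Martínez iff every principal convex ℓ-subgroup is an
intersection of minimal prime subgroups (the empty intersection being `G`). -/
theorem stmt_6 {G : Type*} [Lattice G] [AddGroup G]
    [CovariantClass G G (· + ·) (· ≤ ·)]
    [CovariantClass G G (Function.swap (· + ·)) (· ≤ ·)] :
    Martinez G ↔
      ∀ g : G, ∃ QQ : Set (Set G),
        (∀ Q ∈ QQ, IsMinimalPrimeSubgroup Q) ∧ principalCLS g = ⋂₀ QQ := by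
  constructor
  · -- Martinez → principal CLS are intersections of minimal primes
    intro hM g
    refine ⟨{Q : Set G | IsMinimalPrimeSubgroup Q ∧ g ∈ Q}, fun Q hQ => hQ.1, ?_⟩
    apply Set.Subset.antisymm
    · intro x hx
      rw [Set.mem_sInter]
      rintro Q ⟨hQmin, hgQ⟩
      exact hx Q hQmin.1.1 hgQ
    · intro x hx
      by_contra hxp
      have hcls := principalCLS_cls g
      have hD : IsDSubgroup (principalCLS g) := hM _ hcls
      have hxabs : |x| ∉ principalCLS g := fun h => hxp (mem_of_abs_mem hcls h)
      have hbp : |x| ∉ biPolar g := fun h => hxabs (hD.2 g (self_mem_principalCLS g) h)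
      rw [biPolar, Set.mem_setOf_eq] at hbp
      push_neg at hbp
      obtain ⟨k, hkpol, hkne⟩ := hbp
      rw [labs_eq_abs, labs_eq_abs, abs_abs] at hkne
      set w : G := |x| ⊓ |k| with hwdef
      have hw0 : 0 ≤ w := le_inf (abs_nonneg x) (abs_nonneg k)
      have hwne : w ≠ 0 := hkne
      have hF : IsFilt {v : G | 0 ≤ v ∧ w ≤ v} := by
        refine ⟨⟨w, hw0, le_refl w⟩, ?_, fun v hv => hv.1, ?_, ?_⟩
        · rintro ⟨-, hle⟩
          exact hwne (le_antisymm hle hw0)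
        · rintro v ⟨hv0, hwv⟩ v' hvv'
          exact ⟨hv0.trans hvv', hwv.trans hvv'⟩
        · rintro v ⟨hv0, hwv⟩ v' ⟨hv'0, hwv'⟩
          exact ⟨le_inf hv0 hv'0, le_inf hwv hwv'⟩
      obtain ⟨U, hFU, hU, hmax⟩ := exists_max_filt hF
      have hwU : w ∈ U := hFU ⟨hw0, le_refl w⟩
      have hgP : g ∈ PU U := by
        refine ⟨w, hwU, ?_⟩
        have h2 : |k| ⊓ |g| = 0 := by
          have h2' : labs k ⊓ labs g = 0 := hkpol
          rwa [labs_eq_abs, labs_eq_abs] at h2'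
        have h3 : |g| ⊓ w ≤ 0 := by
          calc |g| ⊓ w ≤ |g| ⊓ |k| := inf_le_inf_left _ inf_le_right
            _ = 0 := by rw [inf_comm]; exact h2
        exact le_antisymm h3 (le_inf (abs_nonneg g) hw0)
      have hxP : x ∉ PU U := by
        rintro ⟨v, hvU, hxv⟩
        have hwv : w ⊓ v = 0 := by
          have h4 : w ⊓ v ≤ 0 := by
            calc w ⊓ v ≤ |x| ⊓ v := inf_le_inf_right v inf_le_left
              _ = 0 := hxv
          exact le_antisymm h4 (le_inf hw0 (hU.2.2.1 v hvU))
        exact hU.2.1 (hwv ▸ hU.2.2.2.2 w hwU v hvU)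
      rw [Set.mem_sInter] at hx
      exact hxP (hx (PU U) ⟨PU_minimal hU hmax, hgP⟩)
  · -- converse
    intro hQQ H hH
    refine ⟨hH, fun h hhH y hy => ?_⟩
    obtain ⟨QQ, hmins, heq⟩ := hQQ h
    have hhI : h ∈ ⋂₀ QQ := heq ▸ self_mem_principalCLS h
    have hyI : y ∈ ⋂₀ QQ := by
      rw [Set.mem_sInter]
      intro Q hQ
      exact minimal_prime_d (hmins Q hQ) (Set.mem_sInter.mp hhI Q hQ) hy
    have hyp : y ∈ principalCLS h := heq.symm ▸ hyI
    exact hyp H hH hhH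
end

section
/- If G is a totally-ordered group, then G is a Martínez ℓ-group if and only if G is archimedean. -/
/-- An ℓ-group is archimedean if `a, b ≥ 0` and `n•a ≤ b` for all `n ∈ ℕ` imply `a = 0`. -/
def IsArchimedeanLGroup (G : Type*) [Lattice G] [AddGroup G] : Prop :=
  ∀ a b : G, 0 ≤ a → 0 ≤ b → (∀ n : ℕ, n • a ≤ b) → a = 0


section AuxStmt7
variable {G : Type*} [Lattice G] [AddGroup G]
    [CovariantClass G G (· + ·) (· ≤ ·)]
    [CovariantClass G G (Function.swap (· + ·)) (· ≤ ·)]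

lemma labs_nonneg' (g : G) : 0 ≤ labs g := by
  have h1 : (0:G) ≤ g ⊔ 0 := le_sup_right
  have h2 : (0:G) ≤ -g ⊔ 0 := le_sup_right
  simpa [labs] using add_le_add h1 h2

omit [CovariantClass G G (· + ·) (· ≤ ·)]
  [CovariantClass G G (Function.swap (· + ·)) (· ≤ ·)] in
lemma labs_zero' : labs (0:G) = 0 := by simp [labs]

lemma labs_eq_zero_iff' (htot : ∀ a b : G, a ≤ b ∨ b ≤ a) (g : G) :
    labs g = 0 ↔ g = 0 := by
  constructor
  · intro h
    rcases htot g 0 with hg | hg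
    · have h1 : g ⊔ 0 = 0 := sup_eq_right.mpr hg
      have h2 : -g ⊔ 0 = -g := sup_eq_left.mpr (neg_nonneg.mpr hg)
      rw [labs, h1, h2, zero_add] at h
      simpa using congrArg Neg.neg h
    · have h1 : g ⊔ 0 = g := sup_eq_left.mpr hg
      have h2 : -g ⊔ 0 = 0 := sup_eq_right.mpr (neg_nonpos.mpr hg)
      rw [labs, h1, h2, add_zero] at h
      exact h
  · intro h; simp [h, labs_zero']

end AuxStmt7

/-- a totally-ordered group is Martínez iff it is archimedean. -/
theorem stmt_7 {G : Type*} [Lattice G] [AddGroup G]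
    [CovariantClass G G (· + ·) (· ≤ ·)]
    [CovariantClass G G (Function.swap (· + ·)) (· ≤ ·)]
    (htot : ∀ a b : G, a ≤ b ∨ b ≤ a) :
    Martinez G ↔ IsArchimedeanLGroup G := by

  constructor
  · -- Martinez → Archimedean
    intro hM a b ha hb hle
    by_contra hane
    set H : Set G := {x | ∃ n : ℕ, x ≤ n • a ∧ -x ≤ n • a} with hHdef
    have hconv : IsConvexLSubgroup H := by
      refine ⟨⟨0, by simp⟩, ?_, ?_, ?_, ?_, ?_⟩
      · rintro x ⟨n, h1, h2⟩
        exact ⟨n, h2, by simpa using h1⟩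
      · rintro x ⟨n, hx1, hx2⟩ y ⟨m, hy1, hy2⟩
        refine ⟨n + m, ?_, ?_⟩
        · rw [add_nsmul]; exact add_le_add hx1 hy1
        · rw [neg_add_rev, show (n + m) • a = m • a + n • a by rw [Nat.add_comm, add_nsmul]]
          exact add_le_add hy2 hx2
      · rintro x ⟨n, hx1, hx2⟩ y ⟨m, hy1, hy2⟩
        have hnm : n • a ≤ (n + m) • a := by
          rw [add_nsmul]; exact le_add_of_nonneg_right (nsmul_nonneg ha m)
        have hmn : m • a ≤ (n + m) • a := by
          rw [add_nsmul]; exact le_add_of_nonneg_left (nsmul_nonneg ha n)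
        refine ⟨n + m, sup_le (hx1.trans hnm) (hy1.trans hmn), ?_⟩
        have : -(x ⊔ y) ≤ -x := neg_le_neg_iff.mpr le_sup_left
        exact this.trans (hx2.trans hnm)
      · rintro x ⟨n, hx1, hx2⟩ y ⟨m, hy1, hy2⟩
        have hnm : n • a ≤ (n + m) • a := by
          rw [add_nsmul]; exact le_add_of_nonneg_right (nsmul_nonneg ha m)
        refine ⟨n + m, (inf_le_left.trans hx1).trans hnm, ?_⟩
        have h1 : -(x ⊓ y) ≤ -x ⊔ -y := by
          rcases htot x y with hxy | hxy
          · rw [inf_eq_left.mpr hxy]; exact le_sup_left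
          · rw [inf_eq_right.mpr hxy]; exact le_sup_right
        have hmn : m • a ≤ (n + m) • a := by
          rw [add_nsmul]; exact le_add_of_nonneg_left (nsmul_nonneg ha n)
        exact h1.trans (sup_le (hx2.trans hnm) (hy2.trans hmn))
      · rintro x ⟨n, hx1, hx2⟩ y ⟨m, hy1, hy2⟩ g hxg hgy
        have hnm : n • a ≤ (n + m) • a := by
          rw [add_nsmul]; exact le_add_of_nonneg_right (nsmul_nonneg ha m)
        have hmn : m • a ≤ (n + m) • a := by
          rw [add_nsmul]; exact le_add_of_nonneg_left (nsmul_nonneg ha n)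
        exact ⟨n + m, (hgy.trans hy1).trans hmn, ((neg_le_neg_iff.mpr hxg).trans hx2).trans hnm⟩
    have haH : a ∈ H := ⟨1, by simpa using le_refl a, by
      simpa using (neg_nonpos.mpr ha).trans ha⟩
    have hla : labs a ≠ 0 := fun h => hane ((labs_eq_zero_iff' htot a).mp h)
    have hbBi : b ∈ biPolar a := by
      intro k hk
      have hk' : labs k ⊓ labs a = 0 := hk
      have hk0 : labs k = 0 := by
        rcases htot (labs k) (labs a) with h | h
        · rwa [inf_eq_left.mpr h] at hk'
        · exact absurd (by rwa [inf_eq_right.mpr h] at hk') hla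
      rw [hk0]
      exact inf_eq_right.mpr (labs_nonneg' b)
    obtain ⟨n, hb1, -⟩ := (hM H hconv).2 a haH hbBi
    have : (n + 1) • a ≤ n • a := (hle (n + 1)).trans hb1
    rw [succ_nsmul] at this
    exact hane (le_antisymm (by simpa using this) ha)
  · -- Archimedean → Martinez
    intro hA H hconv
    obtain ⟨h0, hneg, hadd, hsup, hinf, hcvx⟩ := hconv
    refine ⟨⟨h0, hneg, hadd, hsup, hinf, hcvx⟩, ?_⟩
    intro h hhH x hx
    by_cases hh0 : h = 0
    · subst hh0
      have hx0 : x ∈ polar (0:G) := by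
        show labs x ⊓ labs (0:G) = 0
        rw [labs_zero']
        exact inf_eq_right.mpr (labs_nonneg' x)
      have := hx x hx0
      rw [inf_idem] at this
      rw [(labs_eq_zero_iff' htot x).mp this]
      exact h0
    · -- h ≠ 0 : show x ∈ H using the archimedean property
      set h' : G := h ⊔ -h with hh'def
      have hh'H : h' ∈ H := hsup h hhH (-h) (hneg h hhH)
      have hh'nn : 0 ≤ h' := by
        rcases htot h 0 with hle0 | hge0
        · exact (neg_nonneg.mpr hle0).trans le_sup_right
        · exact hge0.trans le_sup_left
      have hh'ne : h' ≠ 0 := by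
        intro he
        apply hh0
        have h1 : h ≤ 0 := by rw [← he]; exact le_sup_left
        have h2 : -h ≤ 0 := by rw [← he]; exact le_sup_right
        exact le_antisymm h1 (neg_nonpos.mp h2)
      set x' : G := x ⊔ -x with hx'def
      have hx'nn : 0 ≤ x' := by
        rcases htot x 0 with hle0 | hge0
        · exact (neg_nonneg.mpr hle0).trans le_sup_right
        · exact hge0.trans le_sup_left
      have hex : ∃ n : ℕ, x' ≤ n • h' := by
        by_contra hno
        push_neg at hno
        have : ∀ n : ℕ, n • h' ≤ x' := fun n =>
          (htot (n • h') x').resolve_right (fun hle => hno n hle)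
        exact hh'ne (hA h' x' hh'nn hx'nn this)
      obtain ⟨n, hn⟩ := hex
      have hnH : ∀ m : ℕ, m • h' ∈ H := by
        intro m
        induction m with
        | zero => simpa using h0
        | succ k ih => rw [succ_nsmul]; exact hadd _ ih _ hh'H
      have hub : x ≤ n • h' := le_sup_left.trans hn
      have hlb : -(n • h') ≤ x := by
        have : -x ≤ n • h' := le_sup_right.trans hn
        simpa using neg_le_neg_iff.mpr this
      exact hcvx _ (hneg _ (hnH n)) _ (hnH n) x hlb hub
end
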